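/- Let F(x) ∈ 𝓞[x] be a monic irreducible polynomial of degree n with root θ ∈ K̄, of depth r, and let φ(x) ∈ 𝓞[x] be a Montes approximation to F(x). Then any Okutsu frame of F(x) is an Okutsu frame of φ(x), and vice versa; in particular, the relation 'to be a Montes approximation to' is an equivalence relation on the set of all monic irreducible polynomials in 𝓞[x]. -/

import Mathlib

open Polynomial

noncomputable section

/-- A local field `K` of characteristic zero, presented through the canonical extension `v`
of its normalized discrete valuation (additively written, `v(K*) = ℤ`) to a fixed algebraic
closure of `K`.  The axioms state that `v` is an additive valuation on the algebraic closure,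
that its restriction to `K` is a surjective discrete valuation onto `ℤ` (plus `⊤` at `0`),
that it is invariant under `K`-automorphisms (a property of the canonical extension), that
`K` is complete and that its residue field is finite. -/
structure OkutsuSetup (K : Type) [Field K] [CharZero K] : Type where
  v : AlgebraicClosure K → WithTop ℚ
  v_eq_top_iff : ∀ x, v x = ⊤ ↔ x = 0
  v_mul : ∀ x y, v (x * y) = v x + v y
  v_min_le_add : ∀ x y, min (v x) (v y) ≤ v (x + y)
  v_neg : ∀ x, v (-x) = v x
  v_one : v 1 = 0
  v_base_int : ∀ x : K, x ≠ 0 →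
    ∃ k : ℤ, v (algebraMap K (AlgebraicClosure K) x) = ((k : ℚ) : WithTop ℚ)
  v_base_one : ∃ x : K, v (algebraMap K (AlgebraicClosure K) x) = ((1 : ℚ) : WithTop ℚ)
  v_aut_invariant : ∀ (M : IntermediateField K (AlgebraicClosure K)) (σ : ↥M ≃ₐ[K] ↥M)
    (x : ↥M), v ((σ x : ↥M) : AlgebraicClosure K) = v ((x : ↥M) : AlgebraicClosure K)
  complete : ∀ a : ℕ → K,
    (∀ N : ℚ, ∃ M : ℕ, ∀ p q : ℕ, M ≤ p → M ≤ q →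
      ((N : ℚ) : WithTop ℚ) < v (algebraMap K (AlgebraicClosure K) (a p - a q))) →
    ∃ b : K, ∀ N : ℚ, ∃ M : ℕ, ∀ p : ℕ, M ≤ p →
      ((N : ℚ) : WithTop ℚ) < v (algebraMap K (AlgebraicClosure K) (a p - b))
  finite_residue : ∃ T : Finset K, ∀ x : K,
    0 ≤ v (algebraMap K (AlgebraicClosure K) x) →
    ∃ y ∈ T, 0 < v (algebraMap K (AlgebraicClosure K) (x - y))

namespace OkutsuSetup

variable {K : Type} [Field K] [CharZero K]

/-- The valuation of `K` itself. -/
def vK (S : OkutsuSetup K) (x : K) : WithTop ℚ :=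
  S.v (algebraMap K (AlgebraicClosure K) x)

/-- The ring of integers `𝓞` of `K`. -/
def integers (S : OkutsuSetup K) : Subring K where
  carrier := {x : K | 0 ≤ S.vK x}
  zero_mem' := by
    show (0 : WithTop ℚ) ≤ S.vK 0
    unfold vK
    rw [map_zero, (S.v_eq_top_iff 0).mpr rfl]
    exact le_top
  one_mem' := by
    show (0 : WithTop ℚ) ≤ S.vK 1
    unfold vK
    rw [map_one, S.v_one]
  add_mem' := by
    intro a b ha hb
    show (0 : WithTop ℚ) ≤ S.vK (a + b)
    unfold vK
    rw [map_add]
    exact le_trans (le_min ha hb) (S.v_min_le_add _ _)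
  mul_mem' := by
    intro a b ha hb
    show (0 : WithTop ℚ) ≤ S.vK (a * b)
    unfold vK
    rw [map_mul, S.v_mul]
    exact add_nonneg ha hb
  neg_mem' := by
    intro a ha
    show (0 : WithTop ℚ) ≤ S.vK (-a)
    unfold vK
    rw [map_neg, S.v_neg]
    exact ha

/-- The maximal ideal `𝔪` of the ring of integers of `K`. -/
def maximalIdeal (S : OkutsuSetup K) : Ideal S.integers where
  carrier := {x : S.integers | 0 < S.vK (x : K)}
  zero_mem' := by
    show (0 : WithTop ℚ) < S.vK ((0 : S.integers) : K)
    have h0 : ((0 : S.integers) : K) = (0 : K) := rfl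
    rw [h0]
    unfold vK
    rw [map_zero, (S.v_eq_top_iff 0).mpr rfl]
    exact WithTop.coe_lt_top 0
  add_mem' := by
    intro a b ha hb
    show (0 : WithTop ℚ) < S.vK ((a : K) + (b : K))
    refine lt_of_lt_of_le (lt_min ha hb) ?_
    unfold vK
    rw [map_add]
    exact S.v_min_le_add _ _
  smul_mem' := by
    intro c x hx
    show (0 : WithTop ℚ) < S.vK ((c : K) * (x : K))
    unfold vK
    rw [map_mul, S.v_mul]
    calc (0 : WithTop ℚ) < S.v (algebraMap K (AlgebraicClosure K) (x : K)) := hx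
    _ ≤ _ + _ := le_add_of_nonneg_left c.2

/-- The residue field `𝓞/𝔪` of `K`. -/
abbrev Residue (S : OkutsuSetup K) : Type :=
  S.integers ⧸ S.maximalIdeal

/-- The residue characteristic of `K`. -/
def resChar (S : OkutsuSetup K) : ℕ :=
  ringChar S.Residue

/-- Reduction of a polynomial with integer coefficients modulo `𝔪`. -/
def reduce (S : OkutsuSetup K) (F : Polynomial S.integers) : Polynomial S.Residue :=
  F.map (Ideal.Quotient.mk S.maximalIdeal)

/-- Evaluation of a polynomial with coefficients in `𝓞` at a point of the algebraic
closure of `K`. -/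
def evalK (S : OkutsuSetup K) (F : Polynomial S.integers) (θ : AlgebraicClosure K) :
    AlgebraicClosure K :=
  Polynomial.aeval θ (F.map S.integers.subtype)

/-- `v(g)` for a polynomial `g`: the minimum of the valuations of its coefficients. -/
def vPoly (S : OkutsuSetup K) (g : Polynomial S.integers) : WithTop ℚ :=
  (Finset.range (g.natDegree + 1)).inf fun i => S.vK ((g.coeff i : K))

/-- The ramification index `e(E/K)` of a finite subextension `E` of `K̄/K`: the least
positive integer `e` such that all values of `v` on `E*` lie in `(1/e)ℤ`. -/
def ramIdx (S : OkutsuSetup K) (E : IntermediateField K (AlgebraicClosure K)) : ℕ :=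
  sInf {e : ℕ | 0 < e ∧ ∀ x ∈ E, x ≠ (0 : AlgebraicClosure K) →
    ∃ k : ℤ, S.v x = (((k : ℚ) / (e : ℚ) : ℚ) : WithTop ℚ)}

/-- The residual degree `f(E/K)` of a finite subextension `E` of `K̄/K`; since `K` is a
complete discretely valued field, `[E : K] = e(E/K)·f(E/K)`. -/
def resDeg (S : OkutsuSetup K) (E : IntermediateField K (AlgebraicClosure K)) : ℕ :=
  Module.finrank K E / S.ramIdx E

/-- A subextension `E/K` is tamely ramified when its ramification index is prime to the
residue characteristic of `K`. -/
def IsTame (S : OkutsuSetup K) (E : IntermediateField K (AlgebraicClosure K)) : Prop :=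
  Nat.Coprime (S.ramIdx E) S.resChar

/-- The Okutsu invariants `m_0 = 1 ≤ m_1 < ⋯ < m_r < m_{r+1} = n` and
`μ_0 = 0 < μ_1 < ⋯ < μ_r < μ_{r+1} = ∞` of a monic irreducible polynomial of degree `n`
with root `θ`:  `m i` is the least `[K(η):K]` over `η` with `v(θ-η) > μ (i-1)`, and
`μ i` is the greatest value of `v(θ-η)` over `η` with `[K(η):K] = m i`.
`r` is the depth: the number of indices `i ≥ 1` with `m i < n`. -/
structure OkutsuData (S : OkutsuSetup K) (θ : AlgebraicClosure K) (n : ℕ) : Type where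
  r : ℕ
  m : ℕ → ℕ
  μ : ℕ → WithTop ℚ
  m_zero : m 0 = 1
  mu_zero : μ 0 = 0
  m_isLeast : ∀ i, 1 ≤ i → i ≤ r + 1 →
    IsLeast {d : ℕ | ∃ η : AlgebraicClosure K,
      (minpoly K η).natDegree = d ∧ μ (i - 1) < S.v (θ - η)} (m i)
  mu_isGreatest : ∀ i, 1 ≤ i → i ≤ r + 1 →
    IsGreatest {c : WithTop ℚ | ∃ η : AlgebraicClosure K,
      (minpoly K η).natDegree = m i ∧ S.v (θ - η) = c} (μ i)
  m_lt_n : ∀ i, 1 ≤ i → i ≤ r → m i < n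
  m_last : m (r + 1) = n

/-- `[F_1, …, F_r]` is an Okutsu frame of the monic irreducible polynomial with root `θ`
and Okutsu invariants `D`: for each `1 ≤ i ≤ r`, `F_i` is the minimal polynomial of some
`α_i ∈ K̄` with `[K(α_i):K] = m_i` and `v(θ - α_i) = μ_i`. -/
def IsFrame (S : OkutsuSetup K) {θ : AlgebraicClosure K} {n : ℕ} (D : OkutsuData S θ n)
    (Fr : ℕ → Polynomial S.integers) : Prop :=
  ∀ i, 1 ≤ i → i ≤ D.r → ∃ α : AlgebraicClosure K,
    (minpoly K α).natDegree = D.m i ∧ S.v (θ - α) = D.μ i ∧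
      (Fr i).map S.integers.subtype = minpoly K α

/-- `φ` is a Montes approximation to the monic irreducible polynomial `F`:  a monic
irreducible polynomial of the same degree `n` having a root `α` with `v(θ - α) > μ_r`,
where `θ` is a root of `F`. -/
def IsMontesApprox (S : OkutsuSetup K) (F φ : Polynomial S.integers) : Prop :=
  φ.Monic ∧ Irreducible (φ.map S.integers.subtype) ∧ φ.natDegree = F.natDegree ∧
    ∃ θ : AlgebraicClosure K, S.evalK F θ = 0 ∧
      ∃ D : OkutsuData S θ F.natDegree, ∃ α : AlgebraicClosure K,
        S.evalK φ α = 0 ∧ D.μ D.r < S.v (θ - α)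

end OkutsuSetup

/-!
The Okutsu invariants `(m_i, μ_i)_{i ≤ r}` of `θ` only involve the values `v(θ - η)` with
`[K(η):K] < n`, and all of these are `≤ μ_r`. If `v(θ - α) > μ_r`, the ultrametric inequality
gives `v(α - η) = v(θ - η)` for every such `η`, so `α` has the same invariants and the same
frames as `θ`. This yields the two frame statements and the symmetry of the Montes relation;
transitivity follows after moving a root by a `K`-automorphism of `K̄`, which preserves `v`.
Reflexivity needs the invariants to exist, i.e. the maxima `μ_i` to be attained: for
`[K(η):K] = m < n` the values `v(θ - η)` are bounded (Krasner's lemma) and lie in the discrete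
group `(1/N!)ℤ`, `N = n·m`, since `v(x) ∈ (1/[K(x):K])ℤ`.
-/

section FieldTheory

open IntermediateField

variable {K L : Type*} [Field K] [Field L] [Algebra K L]

theorem natDegree_minpoly_le_finrank {E : IntermediateField K L} [FiniteDimensional K E]
    {x : L} (hx : x ∈ E) : (minpoly K x).natDegree ≤ Module.finrank K E := by
  rw [← minpoly_eq ⟨x, hx⟩]
  exact minpoly.natDegree_le _

theorem natDegree_minpoly_le_of_mem_adjoin {x y : L} (hy : IsIntegral K y) (hx : x ∈ K⟮y⟯) :
    (minpoly K x).natDegree ≤ (minpoly K y).natDegree := by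
  have := adjoin.finiteDimensional hy
  exact adjoin.finrank hy ▸ natDegree_minpoly_le_finrank hx

theorem natDegree_minpoly_sub_le {x y : L} (hx : IsIntegral K x) (hy : IsIntegral K y) :
    (minpoly K (x - y)).natDegree ≤ (minpoly K x).natDegree * (minpoly K y).natDegree := by
  have := adjoin.finiteDimensional hx
  have := adjoin.finiteDimensional hy
  have hmem : x - y ∈ K⟮x⟯ ⊔ K⟮y⟯ :=
    sub_mem (le_sup_left (a := K⟮x⟯) (mem_adjoin_simple_self K x))
      (le_sup_right (b := K⟮y⟯) (mem_adjoin_simple_self K y))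
  calc _ ≤ Module.finrank K ↥(K⟮x⟯ ⊔ K⟮y⟯) := natDegree_minpoly_le_finrank hmem
    _ ≤ _ := adjoin.finrank hx ▸ adjoin.finrank hy ▸ finrank_sup_le _ _

end FieldTheory

theorem exists_isGreatest_of_forall_eq_int_div {T : Set (WithTop ℚ)} (hne : T.Nonempty)
    {B : ℚ} (hB : ∀ t ∈ T, t ≤ B) {N : ℕ} (hN : 0 < N)
    (hdisc : ∀ t ∈ T, ∃ k : ℤ, t = ((k / N : ℚ) : WithTop ℚ)) :
    ∃ g, IsGreatest T g := by
  have hNpos : (0 : ℚ) < N := by exact_mod_cast hN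
  have hbdd : ∃ b : ℤ, ∀ k : ℤ, ((k / N : ℚ) : WithTop ℚ) ∈ T → k ≤ b := by
    refine ⟨⌈B * N⌉, fun k hk => ?_⟩
    have : (k / N : ℚ) ≤ B := by exact_mod_cast hB _ hk
    exact_mod_cast ((div_le_iff₀ hNpos).1 this).trans (Int.le_ceil _)
  obtain ⟨t, ht⟩ := hne
  obtain ⟨k, rfl⟩ := hdisc t ht
  obtain ⟨k₀, hk₀, hmax⟩ := Int.exists_greatest_of_bdd hbdd ⟨k, ht⟩
  refine ⟨_, hk₀, fun t ht => ?_⟩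
  obtain ⟨k, rfl⟩ := hdisc t ht
  have hk : (k : ℚ) ≤ k₀ := by exact_mod_cast hmax k ht
  exact_mod_cast div_le_div_of_nonneg_right hk hNpos.le

namespace OkutsuSetup

open IntermediateField

variable {K : Type} [Field K] [CharZero K] (S : OkutsuSetup K)

section Valuation

theorem v_zero : S.v 0 = ⊤ := (S.v_eq_top_iff 0).mpr rfl

theorem v_ne_top {x : AlgebraicClosure K} (hx : x ≠ 0) : S.v x ≠ ⊤ :=
  fun h => hx ((S.v_eq_top_iff x).mp h)

theorem v_sub_comm (x y : AlgebraicClosure K) : S.v (x - y) = S.v (y - x) := by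
  rw [← S.v_neg, neg_sub]

theorem v_add_eq_of_lt {a b : AlgebraicClosure K} (h : S.v b < S.v a) :
    S.v (a + b) = S.v b := by
  refine le_antisymm ?_ ((min_eq_right h.le).symm.trans_le (S.v_min_le_add a b))
  by_contra! hlt
  have := S.v_min_le_add (a + b) (-a)
  rw [S.v_neg, add_neg_cancel_comm] at this
  exact this.not_gt (lt_min hlt h)

theorem v_sub_eq_of_lt {x y z : AlgebraicClosure K} (h : S.v (x - y) < S.v (x - z)) :
    S.v (z - y) = S.v (x - y) := by
  rw [← sub_add_sub_cancel z x y, S.v_add_eq_of_lt (by rwa [S.v_sub_comm z x])]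

theorem v_sub_eq_iff_of_lt {θ α β : AlgebraicClosure K} {c : WithTop ℚ}
    (h : c < S.v (θ - α)) : S.v (α - β) = c ↔ S.v (θ - β) = c := by
  constructor
  · rintro rfl
    exact S.v_sub_eq_of_lt (by rwa [S.v_sub_comm α θ])
  · rintro rfl
    exact S.v_sub_eq_of_lt h

theorem v_algEquiv (σ : AlgebraicClosure K ≃ₐ[K] AlgebraicClosure K) (x : AlgebraicClosure K) :
    S.v (σ x) = S.v x :=
  S.v_aut_invariant ⊤ (topEquiv.trans (σ.trans topEquiv.symm)) ⟨x, trivial⟩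

theorem v_eq_of_isConjRoot {x y : AlgebraicClosure K} (h : IsConjRoot K x y) :
    S.v x = S.v y := by
  obtain ⟨σ, rfl⟩ := h.exists_algEquiv
  exact S.v_algEquiv σ y

theorem v_sub_algEquiv (σ : AlgebraicClosure K ≃ₐ[K] AlgebraicClosure K)
    (x y : AlgebraicClosure K) : S.v (σ x - σ y) = S.v (x - y) := by
  rw [← map_sub, S.v_algEquiv]

end Valuation

section Discreteness

theorem v_multiset_prod (s : Multiset (AlgebraicClosure K)) :
    S.v s.prod = (s.map S.v).sum := by
  induction s using Multiset.induction with
  | empty => simpa using S.v_one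
  | cons a s ih => simp [S.v_mul, ih]

theorem v_neg_one_pow (d : ℕ) : S.v ((-1 : AlgebraicClosure K) ^ d) = 0 := by
  rcases neg_one_pow_eq_or (AlgebraicClosure K) d with h | h <;> simp [h, S.v_neg, S.v_one]

/-- The constant coefficient of the minimal polynomial is, up to sign, the product of the
conjugates of `x`, which all have the valuation of `x`. -/
theorem vK_coeff_zero_minpoly (x : AlgebraicClosure K) :
    S.vK ((minpoly K x).coeff 0) = (minpoly K x).natDegree • S.v x := by
  have hx : IsIntegral K x := Algebra.IsIntegral.isIntegral x
  set P := (minpoly K x).map (algebraMap K (AlgebraicClosure K))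
  have hsplit : P.Splits := IsAlgClosed.splits P
  have hroots : P.roots.map S.v = Multiset.replicate P.roots.card (S.v x) := by
    rw [← Multiset.card_map S.v, Multiset.eq_replicate_card]
    intro c hc
    obtain ⟨ρ, hρ, rfl⟩ := Multiset.mem_map.mp hc
    exact (S.v_eq_of_isConjRoot ((isConjRoot_iff_mem_minpoly_aroots hx).mpr hρ)).symm
  rw [vK, ← Polynomial.coeff_map,
    hsplit.coeff_zero_eq_prod_roots_of_monic ((minpoly.monic hx).map _), S.v_mul,
    S.v_neg_one_pow, zero_add, v_multiset_prod, hroots, Multiset.sum_replicate,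
    ← hsplit.natDegree_eq_card_roots, Polynomial.natDegree_map]

theorem exists_v_eq_int_div_factorial {x : AlgebraicClosure K} (hx : x ≠ 0) {N : ℕ}
    (hN : (minpoly K x).natDegree ≤ N) :
    ∃ k : ℤ, S.v x = ((k / N.factorial : ℚ) : WithTop ℚ) := by
  have hint : IsIntegral K x := Algebra.IsIntegral.isIntegral x
  obtain ⟨q, hq⟩ := WithTop.ne_top_iff_exists.mp (S.v_ne_top hx)
  obtain ⟨k, hk⟩ := S.v_base_int _ (minpoly.coeff_zero_ne_zero hint hx)
  have hkq : (k : ℚ) = (minpoly K x).natDegree * q := by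
    have := S.vK_coeff_zero_minpoly x
    rwa [vK, hk, ← hq, ← WithTop.coe_nsmul, WithTop.coe_eq_coe, nsmul_eq_mul] at this
  obtain ⟨e, he⟩ := Nat.dvd_factorial (minpoly.natDegree_pos hint) hN
  have hd : ((minpoly K x).natDegree : ℚ) ≠ 0 := by
    exact_mod_cast (minpoly.natDegree_pos hint).ne'
  have he0 : (e : ℚ) ≠ 0 := by
    rintro h
    simp only [Nat.cast_eq_zero] at h
    exact N.factorial_ne_zero (by rw [he, h, mul_zero])
  refine ⟨k * e, ?_⟩
  rw [← hq, he, WithTop.coe_eq_coe]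
  push_cast
  rw [hkq]
  field_simp

end Discreteness

section Krasner

theorem mem_adjoin_simple_of_forall_isConjRoot {θ η : AlgebraicClosure K}
    (h : ∀ ρ, IsConjRoot K θ ρ → θ ≠ ρ → S.v (θ - ρ) < S.v (θ - η)) :
    θ ∈ K⟮η⟯ := by
  by_contra hθ
  have hbot : θ ∉ (⊥ : Subalgebra K⟮η⟯ (AlgebraicClosure K)) := fun hbot => by
    obtain ⟨a, rfl⟩ := Algebra.mem_bot.mp hbot
    exact hθ a.2
  obtain ⟨ρ, hne, hconj⟩ := (notMem_iff_exists_ne_and_isConjRoot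
    (Algebra.IsSeparable.isSeparable K⟮η⟯ θ) (IsAlgClosed.splits _)).mp hbot
  -- a `K(η)`-automorphism moving `ρ` to `θ` fixes `η`
  obtain ⟨σ, hσ⟩ := hconj.exists_algEquiv
  have hση : σ η = η := by simpa using σ.commutes (AdjoinSimple.gen K η)
  have hvρ : S.v (η - ρ) = S.v (θ - η) := by
    rw [S.v_sub_comm, ← S.v_algEquiv (σ.restrictScalars K)]
    simp [hσ, hση]
  have hle : S.v (θ - η) ≤ S.v (θ - ρ) := by
    simpa [hvρ] using S.v_min_le_add (θ - η) (η - ρ)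
  exact (h ρ (hconj.of_isScalarTower (Algebra.IsIntegral.isIntegral θ)) hne).not_ge hle

theorem exists_v_sub_le_of_natDegree_lt (θ : AlgebraicClosure K) :
    ∃ B : ℚ, ∀ η : AlgebraicClosure K,
      (minpoly K η).natDegree < (minpoly K θ).natDegree → S.v (θ - η) ≤ B := by
  classical
  have hθ : IsIntegral K θ := Algebra.IsIntegral.isIntegral θ
  set C := ((minpoly K θ).aroots (AlgebraicClosure K)).toFinset.erase θ
  have hC : ∀ ρ ∈ C, ∃ q : ℚ, q = S.v (θ - ρ) := fun ρ hρ =>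
    WithTop.ne_top_iff_exists.mp (S.v_ne_top (sub_ne_zero.mpr (Finset.ne_of_mem_erase hρ).symm))
  choose! q hq using hC
  obtain ⟨B, hB⟩ := (C.image q).exists_le
  refine ⟨B, fun η hη => ?_⟩
  by_contra! hgt
  refine hη.not_ge (natDegree_minpoly_le_of_mem_adjoin (Algebra.IsIntegral.isIntegral η)
    (S.mem_adjoin_simple_of_forall_isConjRoot fun ρ hρ hne => ?_))
  have hmem : ρ ∈ C := Finset.mem_erase.mpr
    ⟨hne.symm, Multiset.mem_toFinset.mpr ((isConjRoot_iff_mem_minpoly_aroots hθ).mp hρ)⟩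
  calc S.v (θ - ρ) = q ρ := (hq ρ hmem).symm
    _ ≤ B := by exact_mod_cast hB _ (Finset.mem_image_of_mem q hmem)
    _ < S.v (θ - η) := hgt

end Krasner

section Recursion

def approxDegrees (θ : AlgebraicClosure K) (μ : WithTop ℚ) : Set ℕ :=
  {d | ∃ η : AlgebraicClosure K, (minpoly K η).natDegree = d ∧ μ < S.v (θ - η)}

def approxValues (θ : AlgebraicClosure K) (m : ℕ) : Set (WithTop ℚ) :=
  {c | ∃ η : AlgebraicClosure K, (minpoly K η).natDegree = m ∧ S.v (θ - η) = c}

def nextDeg (θ : AlgebraicClosure K) (μ : WithTop ℚ) : ℕ :=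
  sInf (S.approxDegrees θ μ)

def nextVal (θ : AlgebraicClosure K) (μ : WithTop ℚ) : WithTop ℚ :=
  Classical.epsilon (IsGreatest (S.approxValues θ (S.nextDeg θ μ)))

/-- `okutsuM S θ i` and `okutsuMu S θ i` are the Okutsu invariants `m_i`, `μ_i` of `θ` for
`i ≤ r + 1`; past that index they are junk (`μ_{r+1} = ⊤` and `sInf ∅ = 0`). -/
def okutsuMu (θ : AlgebraicClosure K) : ℕ → WithTop ℚ
  | 0 => 0
  | i + 1 => S.nextVal θ (okutsuMu θ i)

def okutsuM (θ : AlgebraicClosure K) : ℕ → ℕ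
  | 0 => 1
  | i + 1 => S.nextDeg θ (S.okutsuMu θ i)

theorem approxDegrees_algEquiv (σ : AlgebraicClosure K ≃ₐ[K] AlgebraicClosure K)
    (θ : AlgebraicClosure K) (μ : WithTop ℚ) :
    S.approxDegrees (σ θ) μ = S.approxDegrees θ μ := by
  ext d
  constructor
  · rintro ⟨η, rfl, hv⟩
    refine ⟨σ.symm η, by rw [minpoly.algEquiv_eq], ?_⟩
    rwa [← S.v_sub_algEquiv σ, σ.apply_symm_apply]
  · rintro ⟨η, rfl, hv⟩
    exact ⟨σ η, by rw [minpoly.algEquiv_eq], by rwa [S.v_sub_algEquiv]⟩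

theorem approxValues_algEquiv (σ : AlgebraicClosure K ≃ₐ[K] AlgebraicClosure K)
    (θ : AlgebraicClosure K) (m : ℕ) :
    S.approxValues (σ θ) m = S.approxValues θ m := by
  ext c
  constructor
  · rintro ⟨η, hη, rfl⟩
    refine ⟨σ.symm η, by rwa [minpoly.algEquiv_eq], ?_⟩
    rw [← S.v_sub_algEquiv σ, σ.apply_symm_apply]
  · rintro ⟨η, hη, rfl⟩
    exact ⟨σ η, by rwa [minpoly.algEquiv_eq], S.v_sub_algEquiv σ θ η⟩

variable {θ : AlgebraicClosure K} {μ : WithTop ℚ} {m : ℕ}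

theorem natDegree_mem_approxDegrees (hμ : μ < ⊤) :
    (minpoly K θ).natDegree ∈ S.approxDegrees θ μ :=
  ⟨θ, rfl, by rwa [sub_self, S.v_zero]⟩

theorem isLeast_nextDeg (hμ : μ < ⊤) : IsLeast (S.approxDegrees θ μ) (S.nextDeg θ μ) :=
  ⟨Nat.sInf_mem ⟨_, S.natDegree_mem_approxDegrees hμ⟩, fun _ hd => Nat.sInf_le hd⟩

theorem nextDeg_le (hμ : μ < ⊤) : S.nextDeg θ μ ≤ (minpoly K θ).natDegree :=
  (S.isLeast_nextDeg hμ).2 (S.natDegree_mem_approxDegrees hμ)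

theorem nextDeg_pos (hμ : μ < ⊤) : 0 < S.nextDeg θ μ := by
  obtain ⟨η, hη, -⟩ := (S.isLeast_nextDeg hμ).1
  exact hη ▸ minpoly.natDegree_pos (Algebra.IsIntegral.isIntegral η)

theorem ne_top_of_mem_approxValues {c : WithTop ℚ} (hc : c ∈ S.approxValues θ m)
    (hm : m ≠ (minpoly K θ).natDegree) : c ≠ ⊤ := by
  obtain ⟨η, rfl, rfl⟩ := hc
  exact S.v_ne_top (sub_ne_zero.mpr fun h => hm (by rw [h]))

theorem exists_isGreatest_approxValues (hne : (S.approxValues θ m).Nonempty)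
    (hm : m ≤ (minpoly K θ).natDegree) : ∃ c, IsGreatest (S.approxValues θ m) c := by
  rcases hm.lt_or_eq with hm | rfl
  · obtain ⟨B, hB⟩ := S.exists_v_sub_le_of_natDegree_lt θ
    refine exists_isGreatest_of_forall_eq_int_div hne (B := B) ?_
      (Nat.factorial_pos ((minpoly K θ).natDegree * m)) ?_
    · rintro _ ⟨η, rfl, rfl⟩
      exact hB η hm
    · rintro _ ⟨η, rfl, rfl⟩
      refine S.exists_v_eq_int_div_factorial (sub_ne_zero.mpr fun h => hm.ne (by rw [h])) ?_
      exact natDegree_minpoly_sub_le (Algebra.IsIntegral.isIntegral θ)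
        (Algebra.IsIntegral.isIntegral η)
  · exact ⟨⊤, ⟨θ, rfl, by rw [sub_self, S.v_zero]⟩, fun _ _ => le_top⟩

theorem isGreatest_nextVal (hμ : μ < ⊤) :
    IsGreatest (S.approxValues θ (S.nextDeg θ μ)) (S.nextVal θ μ) := by
  obtain ⟨η, hη, -⟩ := (S.isLeast_nextDeg hμ).1
  exact Classical.epsilon_spec
    (S.exists_isGreatest_approxValues ⟨_, η, hη, rfl⟩ (S.nextDeg_le hμ))

theorem lt_nextVal (hμ : μ < ⊤) : μ < S.nextVal θ μ := by
  obtain ⟨η, hη, hv⟩ := (S.isLeast_nextDeg hμ).1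
  exact hv.trans_le ((S.isGreatest_nextVal hμ).2 ⟨η, hη, rfl⟩)

theorem nextVal_lt_top (hμ : μ < ⊤) (h : S.nextDeg θ μ < (minpoly K θ).natDegree) :
    S.nextVal θ μ < ⊤ :=
  (S.ne_top_of_mem_approxValues (S.isGreatest_nextVal hμ).1 h.ne).lt_top

theorem nextDeg_lt_nextDeg_nextVal (hμ : μ < ⊤)
    (h : S.nextDeg θ μ < (minpoly K θ).natDegree) :
    S.nextDeg θ μ < S.nextDeg θ (S.nextVal θ μ) := by
  obtain ⟨η, hη, hv⟩ := (S.isLeast_nextDeg (S.nextVal_lt_top hμ h)).1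
  rw [← hη]
  refine lt_of_le_of_ne ((S.isLeast_nextDeg hμ).2 ⟨η, rfl, (S.lt_nextVal hμ).trans hv⟩) ?_
  exact fun heq => hv.not_ge ((S.isGreatest_nextVal hμ).2 ⟨η, heq.symm, rfl⟩)

theorem okutsuMu_lt_top {i : ℕ}
    (h : ∀ j, 1 ≤ j → j ≤ i → S.okutsuM θ j < (minpoly K θ).natDegree) :
    S.okutsuMu θ i < ⊤ := by
  induction i with
  | zero => exact WithTop.coe_lt_top 0
  | succ i ih =>
    exact S.nextVal_lt_top (ih fun j h1 h2 => h j h1 (by omega)) (h (i + 1) (by omega) le_rfl)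

theorem le_okutsuM : ∀ {i : ℕ},
    (∀ j, 1 ≤ j → j ≤ i → S.okutsuM θ j < (minpoly K θ).natDegree) →
      i ≤ S.okutsuM θ i
  | 0, _ => Nat.zero_le _
  | 1, _ => S.nextDeg_pos (WithTop.coe_lt_top 0)
  | i + 2, h => by
    have hμ := S.okutsuMu_lt_top (i := i) fun j h1 h2 => h j h1 (by omega)
    have hlt := S.nextDeg_lt_nextDeg_nextVal hμ (h (i + 1) (by omega) (by omega))
    have hle := le_okutsuM (i := i + 1) fun j h1 h2 => h j h1 (by omega)
    exact hle.trans_lt hlt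

theorem nonempty_okutsuData (θ : AlgebraicClosure K) :
    Nonempty (OkutsuData S θ (minpoly K θ).natDegree) := by
  classical
  set n := (minpoly K θ).natDegree
  have hex : ∃ r, n ≤ S.okutsuM θ (r + 1) := by
    by_contra! h
    have hn : 0 < n := minpoly.natDegree_pos (Algebra.IsIntegral.isIntegral θ)
    have hle := S.le_okutsuM (i := n) fun j h1 _ => by
      simpa [Nat.sub_add_cancel h1] using h (j - 1)
    have hlt := h (n - 1)
    rw [Nat.sub_add_cancel hn] at hlt
    omega
  have hlt : ∀ i, 1 ≤ i → i ≤ Nat.find hex → S.okutsuM θ i < n := fun i h1 h2 => by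
    simpa [Nat.sub_add_cancel h1] using Nat.find_min hex (m := i - 1) (by omega)
  have hμ : ∀ i ≤ Nat.find hex, S.okutsuMu θ i < ⊤ := fun i hi =>
    S.okutsuMu_lt_top fun j h1 h2 => hlt j h1 (by omega)
  refine ⟨{
    r := Nat.find hex
    m := S.okutsuM θ
    μ := S.okutsuMu θ
    m_zero := rfl
    mu_zero := rfl
    m_isLeast := fun i h1 h2 => ?_
    mu_isGreatest := fun i h1 h2 => ?_
    m_lt_n := hlt
    m_last := le_antisymm (S.nextDeg_le (hμ _ le_rfl)) (Nat.find_spec hex) }⟩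
  · obtain ⟨k, rfl⟩ := Nat.exists_eq_add_of_le' h1
    exact S.isLeast_nextDeg (hμ k (by omega))
  · obtain ⟨k, rfl⟩ := Nat.exists_eq_add_of_le' h1
    exact S.isGreatest_nextVal (hμ k (by omega))

end Recursion

namespace OkutsuData

variable {S} {θ α : AlgebraicClosure K} {n : ℕ} (D : OkutsuData S θ n)

theorem mu_lt_mu_succ {i : ℕ} (hi : i ≤ D.r) : D.μ i < D.μ (i + 1) := by
  obtain ⟨η, hη, hv⟩ := (D.m_isLeast (i + 1) (by omega) (by omega)).1
  exact hv.trans_le ((D.mu_isGreatest (i + 1) (by omega) (by omega)).2 ⟨η, hη, rfl⟩)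

theorem mu_mono {i j : ℕ} (hij : i ≤ j) (hj : j ≤ D.r + 1) : D.μ i ≤ D.μ j := by
  induction j, hij using Nat.le_induction with
  | base => exact le_rfl
  | succ j _ ih => exact (ih (by omega)).trans (D.mu_lt_mu_succ (by omega)).le

theorem m_le {i : ℕ} (h1 : 1 ≤ i) (h2 : i ≤ D.r + 1) : D.m i ≤ n := by
  rcases h2.lt_or_eq with h | rfl
  · exact (D.m_lt_n i h1 (by omega)).le
  · exact D.m_last.le

theorem v_sub_le_mu_depth {η : AlgebraicClosure K} (hη : (minpoly K η).natDegree < n) :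
    S.v (θ - η) ≤ D.μ D.r := by
  by_contra! h
  have := (D.m_isLeast (D.r + 1) (by omega) le_rfl).2 ⟨η, rfl, h⟩
  rw [D.m_last] at this
  omega

theorem mu_depth_ne_top (hθ : (minpoly K θ).natDegree = n) : D.μ D.r ≠ ⊤ := by
  rcases Nat.eq_zero_or_pos D.r with h | h
  · rw [h, D.mu_zero]
    exact WithTop.zero_ne_top
  · exact S.ne_top_of_mem_approxValues (D.mu_isGreatest D.r h (by omega)).1
      (hθ ▸ (D.m_lt_n D.r h le_rfl).ne)

theorem mu_succ_depth (hθ : (minpoly K θ).natDegree = n) : D.μ (D.r + 1) = ⊤ :=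
  top_le_iff.mp ((D.mu_isGreatest (D.r + 1) (by omega) le_rfl).2
    ⟨θ, by rw [hθ, D.m_last], by rw [sub_self, S.v_zero]⟩)

theorem unique {n' : ℕ} (D' : OkutsuData S θ n') (hn : n = n') :
    D.r = D'.r ∧ ∀ i ≤ D.r + 1, D.m i = D'.m i ∧ D.μ i = D'.μ i := by
  subst hn
  have key : ∀ i ≤ min D.r D'.r + 1, D.m i = D'.m i ∧ D.μ i = D'.μ i := by
    intro i hi
    induction i with
    | zero => exact ⟨D.m_zero.trans D'.m_zero.symm, D.mu_zero.trans D'.mu_zero.symm⟩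
    | succ i ih =>
      have hL : IsLeast (S.approxDegrees θ (D.μ i)) (D'.m (i + 1)) := by
        rw [(ih (by omega)).2]
        exact D'.m_isLeast (i + 1) (by omega) (by omega)
      have hm := (D.m_isLeast (i + 1) (by omega) (by omega)).unique hL
      have hG : IsGreatest (S.approxValues θ (D.m (i + 1))) (D'.μ (i + 1)) := by
        rw [hm]
        exact D'.mu_isGreatest (i + 1) (by omega) (by omega)
      exact ⟨hm, (D.mu_isGreatest (i + 1) (by omega) (by omega)).unique hG⟩
  -- the depth is the first index at which `m` reaches `n`
  have hr : D.r = D'.r := by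
    by_contra hne
    rcases Nat.lt_or_gt_of_ne hne with h | h
    · have := (key (D.r + 1) (by omega)).1
      have := D'.m_lt_n (D.r + 1) (by omega) (by omega)
      have := D.m_last
      omega
    · have := (key (D'.r + 1) (by omega)).1
      have := D.m_lt_n (D'.r + 1) (by omega) (by omega)
      have := D'.m_last
      omega
  exact ⟨hr, fun i hi => key i (by omega)⟩

theorem mu_depth_eq {n' : ℕ} (D' : OkutsuData S θ n') (hn : n = n') :
    D.μ D.r = D'.μ D'.r := by
  obtain ⟨hr, h⟩ := D.unique D' hn
  rw [(h D.r (by omega)).2, hr]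

theorem isFrame_iff (D' : OkutsuData S θ n) {Fr : ℕ → Polynomial S.integers} :
    S.IsFrame D Fr ↔ S.IsFrame D' Fr := by
  obtain ⟨hr, h⟩ := D.unique D' rfl
  refine forall_congr' fun i => imp_congr_right fun _ => ?_
  rw [hr]
  refine imp_congr_right fun hi => ?_
  rw [(h i (by omega)).1, (h i (by omega)).2]

def map (σ : AlgebraicClosure K ≃ₐ[K] AlgebraicClosure K) : OkutsuData S (σ θ) n where
  r := D.r
  m := D.m
  μ := D.μ
  m_zero := D.m_zero
  mu_zero := D.mu_zero
  m_isLeast i h1 h2 := by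
    change IsLeast (S.approxDegrees _ _) _
    rw [S.approxDegrees_algEquiv]
    exact D.m_isLeast i h1 h2
  mu_isGreatest i h1 h2 := by
    change IsGreatest (S.approxValues _ _) _
    rw [S.approxValues_algEquiv]
    exact D.mu_isGreatest i h1 h2
  m_lt_n := D.m_lt_n
  m_last := D.m_last

theorem v_sub_eq_of_natDegree_lt (hv : D.μ D.r < S.v (θ - α)) {η : AlgebraicClosure K}
    (hη : (minpoly K η).natDegree < n) : S.v (α - η) = S.v (θ - η) :=
  S.v_sub_eq_of_lt ((D.v_sub_le_mu_depth hη).trans_lt hv)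

theorem isLeast_approxDegrees_of_lt (hα : (minpoly K α).natDegree = n)
    (hv : D.μ D.r < S.v (θ - α)) {i : ℕ} (h1 : 1 ≤ i) (h2 : i ≤ D.r + 1) :
    IsLeast (S.approxDegrees α (D.μ (i - 1))) (D.m i) := by
  obtain ⟨⟨η, hη, hvη⟩, hmin⟩ := D.m_isLeast i h1 h2
  refine ⟨?_, ?_⟩
  · rcases h2.lt_or_eq with hi | rfl
    · have hηn : (minpoly K η).natDegree < n := hη ▸ D.m_lt_n i h1 (by omega)
      exact ⟨η, hη, by rwa [D.v_sub_eq_of_natDegree_lt hv hηn]⟩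
    · exact ⟨α, hα.trans D.m_last.symm, by rw [sub_self, S.v_zero]; exact hv.trans_le le_top⟩
  · rintro _ ⟨η, rfl, hvη⟩
    by_cases hηn : (minpoly K η).natDegree < n
    · exact hmin ⟨η, rfl, by rwa [← D.v_sub_eq_of_natDegree_lt hv hηn]⟩
    · exact (D.m_le h1 h2).trans (not_lt.mp hηn)

theorem isGreatest_approxValues_of_lt (hθ : (minpoly K θ).natDegree = n)
    (hα : (minpoly K α).natDegree = n) (hv : D.μ D.r < S.v (θ - α)) {i : ℕ} (h1 : 1 ≤ i)
    (h2 : i ≤ D.r + 1) : IsGreatest (S.approxValues α (D.m i)) (D.μ i) := by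
  rcases h2.lt_or_eq with hi | rfl
  · have hmi := D.m_lt_n i h1 (by omega)
    obtain ⟨⟨η, hη, hvη⟩, hmax⟩ := D.mu_isGreatest i h1 h2
    refine ⟨⟨η, hη, (D.v_sub_eq_of_natDegree_lt hv (hη ▸ hmi)).trans hvη⟩, ?_⟩
    rintro _ ⟨η, hη, rfl⟩
    rw [D.v_sub_eq_of_natDegree_lt hv (hη ▸ hmi)]
    exact hmax ⟨η, hη, rfl⟩
  · rw [D.mu_succ_depth hθ]
    exact ⟨⟨α, hα.trans D.m_last.symm, by rw [sub_self, S.v_zero]⟩, fun _ _ => le_top⟩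

def transfer (hθ : (minpoly K θ).natDegree = n) (hα : (minpoly K α).natDegree = n)
    (hv : D.μ D.r < S.v (θ - α)) : OkutsuData S α n where
  r := D.r
  m := D.m
  μ := D.μ
  m_zero := D.m_zero
  mu_zero := D.mu_zero
  m_isLeast _ h1 h2 := D.isLeast_approxDegrees_of_lt hα hv h1 h2
  mu_isGreatest _ h1 h2 := D.isGreatest_approxValues_of_lt hθ hα hv h1 h2
  m_lt_n := D.m_lt_n
  m_last := D.m_last

theorem isFrame_transfer_iff (hθ : (minpoly K θ).natDegree = n)
    (hα : (minpoly K α).natDegree = n) (hv : D.μ D.r < S.v (θ - α))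
    {Fr : ℕ → Polynomial S.integers} : S.IsFrame (D.transfer hθ hα hv) Fr ↔ S.IsFrame D Fr :=
  forall_congr' fun _ => imp_congr_right fun _ => imp_congr_right fun hi =>
    exists_congr fun _ => and_congr_right fun _ => and_congr_left fun _ =>
      S.v_sub_eq_iff_of_lt ((D.mu_mono hi D.r.le_succ).trans_lt hv)

end OkutsuData

section MontesApprox

theorem minpoly_eq_of_evalK_eq_zero {g : Polynomial S.integers} (hg : g.Monic)
    (hirr : Irreducible (g.map S.integers.subtype)) {x : AlgebraicClosure K}
    (hx : S.evalK g x = 0) : minpoly K x = g.map S.integers.subtype :=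
  (minpoly.eq_of_irreducible_of_monic hirr hx (hg.map _)).symm

theorem natDegree_minpoly_of_evalK_eq_zero {g : Polynomial S.integers} (hg : g.Monic)
    (hirr : Irreducible (g.map S.integers.subtype)) {x : AlgebraicClosure K}
    (hx : S.evalK g x = 0) : (minpoly K x).natDegree = g.natDegree := by
  rw [S.minpoly_eq_of_evalK_eq_zero hg hirr hx, hg.natDegree_map]

theorem exists_evalK_eq_zero {g : Polynomial S.integers}
    (hirr : Irreducible (g.map S.integers.subtype)) : ∃ x, S.evalK g x = 0 :=
  IsAlgClosed.exists_aeval_eq_zero _ _ (Polynomial.degree_pos_of_irreducible hirr).ne'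

theorem evalK_algEquiv (g : Polynomial S.integers)
    (σ : AlgebraicClosure K ≃ₐ[K] AlgebraicClosure K) (x : AlgebraicClosure K) :
    S.evalK g (σ x) = σ (S.evalK g x) :=
  Polynomial.aeval_algHom_apply σ x _

theorem isMontesApprox_refl {g : Polynomial S.integers} (hg : g.Monic)
    (hirr : Irreducible (g.map S.integers.subtype)) : S.IsMontesApprox g g := by
  obtain ⟨x, hx⟩ := S.exists_evalK_eq_zero hirr
  have hxn := S.natDegree_minpoly_of_evalK_eq_zero hg hirr hx
  obtain ⟨D⟩ := hxn ▸ S.nonempty_okutsuData x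
  refine ⟨hg, hirr, rfl, x, hx, D, x, hx, ?_⟩
  rw [sub_self, S.v_zero]
  exact (D.mu_depth_ne_top hxn).lt_top

variable {S}

theorem IsMontesApprox.symm {F φ : Polynomial S.integers} (h : S.IsMontesApprox F φ)
    (hF : F.Monic) (hFirr : Irreducible (F.map S.integers.subtype)) :
    S.IsMontesApprox φ F := by
  obtain ⟨hφ, hφirr, hdeg, θ, hθ, D, α, hα, hv⟩ := h
  have hθn := S.natDegree_minpoly_of_evalK_eq_zero hF hFirr hθ
  have hαn := hdeg ▸ S.natDegree_minpoly_of_evalK_eq_zero hφ hφirr hα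
  rw [IsMontesApprox, hdeg]
  exact ⟨hF, hFirr, rfl, α, hα, D.transfer hθn hαn hv, θ, hθ, by rwa [S.v_sub_comm]⟩

theorem IsMontesApprox.trans {F₁ F₂ F₃ : Polynomial S.integers}
    (h₁₂ : S.IsMontesApprox F₁ F₂) (h₂₃ : S.IsMontesApprox F₂ F₃) (hF₁ : F₁.Monic)
    (hF₁irr : Irreducible (F₁.map S.integers.subtype)) : S.IsMontesApprox F₁ F₃ := by
  obtain ⟨hF₂, hF₂irr, hdeg₂₁, θ₁, hθ₁, D₁, α₁, hα₁, hv₁⟩ := h₁₂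
  obtain ⟨hF₃, hF₃irr, hdeg₃₂, θ₂, hθ₂, D₂, α₂, hα₂, hv₂⟩ := h₂₃
  have hθ₁n := S.natDegree_minpoly_of_evalK_eq_zero hF₁ hF₁irr hθ₁
  have hα₁n := hdeg₂₁ ▸ S.natDegree_minpoly_of_evalK_eq_zero hF₂ hF₂irr hα₁
  obtain ⟨σ, rfl⟩ : ∃ σ : AlgebraicClosure K ≃ₐ[K] AlgebraicClosure K, σ θ₂ = α₁ :=
    IsConjRoot.exists_algEquiv <| (S.minpoly_eq_of_evalK_eq_zero hF₂ hF₂irr hα₁).trans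
      (S.minpoly_eq_of_evalK_eq_zero hF₂ hF₂irr hθ₂).symm
  have hμ : D₂.μ D₂.r = D₁.μ D₁.r :=
    (D₂.map σ).mu_depth_eq (D₁.transfer hθ₁n hα₁n hv₁) hdeg₂₁
  refine ⟨hF₃, hF₃irr, hdeg₃₂.trans hdeg₂₁, θ₁, hθ₁, D₁, σ α₂,
    by rw [S.evalK_algEquiv, hα₂, map_zero], ?_⟩
  calc D₁.μ D₁.r < min (S.v (θ₁ - σ θ₂)) (S.v (σ θ₂ - σ α₂)) :=
        lt_min hv₁ (by rwa [S.v_sub_algEquiv, ← hμ])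
    _ ≤ S.v (θ₁ - σ α₂) := by
        simpa only [sub_add_sub_cancel] using S.v_min_le_add (θ₁ - σ θ₂) (σ θ₂ - σ α₂)

end MontesApprox

end OkutsuSetup

open OkutsuSetup in
/-- Let `F ∈ 𝓞[x]` be monic irreducible of degree `n` with root `θ`,
of depth `r`, and let `φ ∈ 𝓞[x]` be a Montes approximation to `F` (with root `α`,
`v(θ - α) > μ_r`).  Then any Okutsu frame of `F` is an Okutsu frame of `φ` and vice
versa; in particular the relation "to be a Montes approximation to" is an equivalence
relation on the set of all monic irreducible polynomials in `𝓞[x]`. -/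
theorem okutsu_stmt_17 {K : Type} [Field K] [CharZero K] (S : OkutsuSetup K)
    (F : Polynomial S.integers) (hFmonic : F.Monic)
    (hFirr : Irreducible (F.map S.integers.subtype))
    (n : ℕ) (hFdeg : F.natDegree = n)
    (θ : AlgebraicClosure K) (hθ : S.evalK F θ = 0)
    (D : OkutsuData S θ n)
    (φ : Polynomial S.integers) (hφmonic : φ.Monic)
    (hφirr : Irreducible (φ.map S.integers.subtype))
    (hφdeg : φ.natDegree = n)
    (α : AlgebraicClosure K) (hαroot : S.evalK φ α = 0)
    (hαv : D.μ D.r < S.v (θ - α)) :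
    -- any Okutsu frame of `F` is an Okutsu frame of `φ`…
    (∀ Fr : ℕ → Polynomial S.integers, S.IsFrame D Fr →
      ∃ D' : OkutsuData S α n, D'.r = D.r ∧ S.IsFrame D' Fr) ∧
    -- …and vice versa
    (∀ (D' : OkutsuData S α n) (Fr : ℕ → Polynomial S.integers),
      S.IsFrame D' Fr → S.IsFrame D Fr) ∧
    -- in particular, "to be a Montes approximation to" is an equivalence relation on
    -- the set of all monic irreducible polynomials of `𝓞[x]`
    Equivalence (fun F₁ F₂ : {g : Polynomial S.integers //
        g.Monic ∧ Irreducible (g.map S.integers.subtype)} =>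
      S.IsMontesApprox F₁.1 F₂.1) := by
  have hθn := hFdeg ▸ S.natDegree_minpoly_of_evalK_eq_zero hFmonic hFirr hθ
  have hαn := hφdeg ▸ S.natDegree_minpoly_of_evalK_eq_zero hφmonic hφirr hαroot
  refine ⟨fun Fr hFr => ⟨D.transfer hθn hαn hαv, rfl,
      (D.isFrame_transfer_iff hθn hαn hαv).2 hFr⟩,
    fun D' Fr hFr => (D.isFrame_transfer_iff hθn hαn hαv).1 ((D'.isFrame_iff _).1 hFr), ?_⟩
  exact ⟨fun g => S.isMontesApprox_refl g.2.1 g.2.2, fun {F₁ _} h => h.symm F₁.2.1 F₁.2.2,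
    fun {F₁ _ _} h₁₂ h₂₃ => h₁₂.trans h₂₃ F₁.2.1 F₁.2.2⟩
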